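/- Let n ≥ 3 be an integer and let a, b > 0 with a ≠ b. Define, for x ∈ ℝⁿ \ Ω(a,b), Φ₀(x) = (1/|Ω(a,b)|) ∫_{Ω(a,b)} |x−y|^{−(n−2)} dy and Ψ(x) = (1/|Ω(a,b)|) ∫_{Ω(a,b)} (x₁−y₁)²/|x−y|ⁿ dy. Then for every x = (x₁, x') ∈ ℝⁿ \ Ω(a,b), with x' = (x₂,…,xₙ), one has Ψ(x) = (a²/(a²−b²)) Φ₀(x) + (1/((n−2)(a²−b²))) ∇Φ₀(x) · (b²x₁, a²x'). -/

import Mathlib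

open MeasureTheory Set Filter Topology
open scoped ENNReal NNReal Real BigOperators RealInnerProductSpace

noncomputable section

attribute [local instance] Classical.propDecidable

/-- `ℝⁿ` as a Euclidean space. -/
abbrev Euc (n : ℕ) := EuclideanSpace ℝ (Fin n)

/-- The anisotropic interaction kernel `W_α`, with values in `[0,+∞]`:
`W_α(x) = 1/|x|^(n-2) + α x₁²/|x|ⁿ` for `x ≠ 0`, and `W_α(0) = +∞`. -/
def kerW (n : ℕ) [NeZero n] (α : ℝ) (x : Euc n) : ℝ≥0∞ :=
  if x = 0 then ⊤
  else ENNReal.ofReal (1 / ‖x‖ ^ (n - 2) + α * (x 0) ^ 2 / ‖x‖ ^ n)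

/-- The nonlocal energy `I_α(μ) = ∬ W_α(x-y) dμ(x)dμ(y) + ∫ |x|² dμ(x)`. -/
def energyI (n : ℕ) [NeZero n] (α : ℝ) (μ : Measure (Euc n)) : ℝ≥0∞ :=
  (∫⁻ p : Euc n × Euc n, kerW n α (p.1 - p.2) ∂(μ.prod μ)) +
    ∫⁻ x, ENNReal.ofReal (‖x‖ ^ 2) ∂μ


/-- The spheroid `Ω(a,b) = {x : x₁²/a² + (x₂²+⋯+xₙ²)/b² ≤ 1}`. -/
def sphSet (n : ℕ) [NeZero n] (a b : ℝ) : Set (Euc n) :=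
  {x | (x 0) ^ 2 / a ^ 2 + (∑ i ∈ Finset.univ.erase (0 : Fin n), (x i) ^ 2) / b ^ 2 ≤ 1}

/-- The normalised Lebesgue measure `(1/|Ω(a,b)|) χ_{Ω(a,b)}` on the spheroid `Ω(a,b)`. -/
def sphMeas (n : ℕ) [NeZero n] (a b : ℝ) : Measure (Euc n) :=
  (volume (sphSet n a b))⁻¹ • volume.restrict (sphSet n a b)

/-- The potential `(W_α ∗ μ)(x) = ∫ W_α(x-y) dμ(y)`. -/
def potConv (n : ℕ) [NeZero n] (α : ℝ) (μ : Measure (Euc n)) (x : Euc n) : ℝ≥0∞ :=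
  ∫⁻ y, kerW n α (x - y) ∂μ

/-- The averaged Coulomb potential `Φ₀` of the spheroid `Ω(a,b)`. -/
def coulPot (n : ℕ) [NeZero n] (a b : ℝ) (x : Euc n) : ℝ :=
  (volume (sphSet n a b)).toReal⁻¹ * ∫ y in sphSet n a b, 1 / ‖x - y‖ ^ (n - 2)

/-- The averaged anisotropic potential `Ψ` of the spheroid `Ω(a,b)`. -/
def anisPot (n : ℕ) [NeZero n] (a b : ℝ) (x : Euc n) : ℝ :=
  (volume (sphSet n a b)).toReal⁻¹ *
    ∫ y in sphSet n a b, (x 0 - y 0) ^ 2 / ‖x - y‖ ^ n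

namespace Stmt12

variable {n : ℕ} [NeZero n]

/-! ### Basic norms and sums on `Euc n` -/

lemma norm_sq_eq (y : Euc n) : ‖y‖ ^ 2 = ∑ i, y i ^ 2 := by
  rw [EuclideanSpace.norm_eq, Real.sq_sqrt (by positivity)]
  simp [sq_abs]

/-! ### rpow computations -/

lemma rpow_half (w : Euc n) (m : ℕ) (hm : m ≠ 0) :
    (‖w‖ ^ 2 : ℝ) ^ (-(m : ℝ) / 2) = (‖w‖ ^ m)⁻¹ := by
  rcases eq_or_ne w 0 with rfl | hw
  · rw [norm_zero]
    rw [show ((0:ℝ)^2) = 0 by norm_num, Real.zero_rpow (by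
      simp only [ne_eq, div_eq_zero_iff, neg_eq_zero, Nat.cast_eq_zero]
      push_neg; exact ⟨hm, by norm_num⟩), zero_pow hm, inv_zero]
  · have h0 : (0:ℝ) < ‖w‖ := norm_pos_iff.2 hw
    rw [← Real.rpow_natCast ‖w‖ 2, ← Real.rpow_mul h0.le]
    rw [show ((2:ℕ):ℝ) * (-(m:ℝ)/2) = -(m:ℝ) by push_cast; ring]
    rw [Real.rpow_neg h0.le, Real.rpow_natCast]

lemma kernel_rpow (hn : 3 ≤ n) (w : Euc n) :
    (‖w‖ ^ 2 : ℝ) ^ (((2 : ℝ) - n) / 2) = 1 / ‖w‖ ^ (n - 2) := by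
  have h2 : (2:ℕ) ≤ n := le_trans (by norm_num) hn
  have hc : ((2 : ℝ) - n) / 2 = -((n - 2 : ℕ) : ℝ) / 2 := by
    rw [Nat.cast_sub h2]; push_cast; ring
  rw [hc, rpow_half w (n - 2) (by omega), one_div]

lemma smul_rpow_half (hn : 3 ≤ n) (w : Euc n) :
    (‖w‖ ^ 2 : ℝ) * (‖w‖ ^ 2 : ℝ) ^ (-(n : ℝ) / 2) = 1 / ‖w‖ ^ (n - 2) := by
  rw [← kernel_rpow hn w]
  rcases eq_or_ne w 0 with rfl | hw
  · have hne : ((2:ℝ) - n) / 2 ≠ 0 := by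
      have h3 : (3:ℝ) ≤ (n:ℝ) := by exact_mod_cast hn
      intro h
      rw [div_eq_zero_iff] at h
      rcases h with h | h
      · linarith
      · norm_num at h
    simp [Real.zero_rpow hne]
  · have h0 : (0:ℝ) < ‖w‖ ^ 2 := pow_pos (norm_pos_iff.2 hw) 2
    nth_rewrite 1 [← Real.rpow_one (‖w‖ ^ 2 : ℝ)]
    rw [← Real.rpow_add h0]
    congr 1
    ring

/-! ### The quadratic form Q -/

def cf (a b : ℝ) (i : Fin n) : ℝ := if i = 0 then (a ^ 2)⁻¹ else (b ^ 2)⁻¹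

def Qf (a b : ℝ) (y : Euc n) : ℝ := ∑ i, cf a b i * y i ^ 2

variable {a b : ℝ}

lemma cf_pos (ha : 0 < a) (hb : 0 < b) (i : Fin n) : 0 < cf a b i := by
  unfold cf; split <;> positivity

lemma Qf_nonneg (ha : 0 < a) (hb : 0 < b) (y : Euc n) : 0 ≤ Qf a b y :=
  Finset.sum_nonneg fun i _ => mul_nonneg (cf_pos ha hb i).le (sq_nonneg _)

lemma sum_split (f : Fin n → ℝ) : ∑ i, f i = f 0 + ∑ i ∈ Finset.univ.erase 0, f i :=
  (Finset.add_sum_erase _ f (Finset.mem_univ 0)).symm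

lemma sphSet_eq : sphSet n a b = {y | Qf a b y ≤ 1} := by
  ext y
  simp only [sphSet, mem_setOf_eq, Qf]
  rw [sum_split (fun i => cf a b i * y i ^ 2)]
  have h0 : cf a b (0 : Fin n) = (a^2)⁻¹ := if_pos rfl
  have hsum : ∑ i ∈ Finset.univ.erase (0 : Fin n), cf a b i * y i ^ 2
      = (∑ i ∈ Finset.univ.erase (0 : Fin n), y i ^ 2) / b ^ 2 := by
    rw [Finset.sum_div]
    refine Finset.sum_congr rfl fun i hi => ?_
    rw [cf, if_neg (Finset.ne_of_mem_erase hi), div_eq_mul_inv, mul_comm]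
  rw [h0, hsum, div_eq_mul_inv (y 0 ^ 2), mul_comm (y 0 ^ 2)]

lemma continuous_Qf : Continuous (Qf a b (n := n)) := by
  unfold Qf
  exact continuous_finset_sum _ fun i _ =>
    continuous_const.mul ((EuclideanSpace.proj (𝕜 := ℝ) i).continuous.pow 2)

lemma contDiff_Qf {m : WithTop ℕ∞} : ContDiff ℝ m (Qf a b (n := n)) := by
  unfold Qf
  exact ContDiff.sum fun i _ =>
    contDiff_const.mul (((EuclideanSpace.proj (𝕜 := ℝ) i).contDiff).pow 2)

lemma norm_sq_le_Qf (ha : 0 < a) (hb : 0 < b) (y : Euc n) :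
    ‖y‖ ^ 2 ≤ max (a ^ 2) (b ^ 2) * Qf a b y := by
  rw [norm_sq_eq, Qf, Finset.mul_sum]
  refine Finset.sum_le_sum fun i _ => ?_
  have h1 : (1:ℝ) ≤ max (a ^ 2) (b ^ 2) * cf a b i := by
    unfold cf; split
    · calc (1:ℝ) = a ^ 2 * (a ^ 2)⁻¹ := by field_simp
        _ ≤ max (a ^ 2) (b ^ 2) * (a ^ 2)⁻¹ := by gcongr; exact le_max_left _ _
    · calc (1:ℝ) = b ^ 2 * (b ^ 2)⁻¹ := by field_simp
        _ ≤ max (a ^ 2) (b ^ 2) * (b ^ 2)⁻¹ := by gcongr; exact le_max_right _ _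
  calc y i ^ 2 = 1 * y i ^ 2 := (one_mul _).symm
    _ ≤ (max (a ^ 2) (b ^ 2) * cf a b i) * y i ^ 2 := by
        exact mul_le_mul_of_nonneg_right h1 (sq_nonneg _)
    _ = max (a ^ 2) (b ^ 2) * (cf a b i * y i ^ 2) := by ring

lemma Qf_smul (t : ℝ) (y : Euc n) : Qf a b (t • y) = t ^ 2 * Qf a b y := by
  unfold Qf
  rw [Finset.mul_sum]
  refine Finset.sum_congr rfl fun i _ => ?_
  rw [PiLp.smul_apply, smul_eq_mul]
  ring

lemma Qf_add_single (i : Fin n) (t : ℝ) (y : Euc n) :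
    Qf a b (y + t • EuclideanSpace.single i 1)
      = Qf a b y + 2 * cf a b i * y i * t + cf a b i * t ^ 2 := by
  unfold Qf
  have h : ∀ j : Fin n, cf a b j * ((y + t • EuclideanSpace.single i (1:ℝ)) j) ^ 2
      = cf a b j * y j ^ 2 + (if j = i then 2 * cf a b i * y i * t + cf a b i * t ^ 2 else 0) := by
    intro j
    have hj : (y + t • EuclideanSpace.single i (1:ℝ)) j = y j + (if j = i then t else 0) := by
      rw [PiLp.add_apply, PiLp.smul_apply, EuclideanSpace.single_apply, smul_eq_mul]
      by_cases hji : j = i <;> simp [hji]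
    rw [hj]
    by_cases hji : j = i
    · subst hji; simp; ring
    · simp [hji]
  rw [Finset.sum_congr rfl (fun j _ => h j), Finset.sum_add_distrib,
    Finset.sum_ite_eq' Finset.univ i]
  simp only [Finset.mem_univ, if_true]
  ring


/-! ### Set facts about the ellipsoid -/

lemma isCompact_sub (ha : 0 < a) (hb : 0 < b) (c : ℝ) :
    IsCompact {y : Euc n | Qf a b y ≤ c} := by
  refine Metric.isCompact_of_isClosed_isBounded (isClosed_le continuous_Qf continuous_const) ?_
  rw [isBounded_iff_forall_norm_le]
  refine ⟨Real.sqrt (max (a ^ 2) (b ^ 2) * |c|), fun y hy => ?_⟩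
  have h1 : ‖y‖ ^ 2 ≤ max (a ^ 2) (b ^ 2) * |c| := by
    calc ‖y‖ ^ 2 ≤ max (a ^ 2) (b ^ 2) * Qf a b y := norm_sq_le_Qf ha hb y
      _ ≤ max (a ^ 2) (b ^ 2) * |c| := by
          refine mul_le_mul_of_nonneg_left (le_trans hy (le_abs_self c)) ?_
          positivity
  calc ‖y‖ = Real.sqrt (‖y‖ ^ 2) := (Real.sqrt_sq (norm_nonneg y)).symm
    _ ≤ Real.sqrt (max (a ^ 2) (b ^ 2) * |c|) := Real.sqrt_le_sqrt h1

lemma convex_Omega (ha : 0 < a) (hb : 0 < b) :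
    Convex ℝ {y : Euc n | Qf a b y ≤ 1} := by
  have hQ : ConvexOn ℝ univ (Qf a b (n := n)) := by
    have hterm : ∀ i : Fin n, ConvexOn ℝ univ (fun y : Euc n => cf a b i * y i ^ 2) := by
      intro i
      have hsq : ConvexOn ℝ univ (fun t : ℝ => t ^ 2) := Even.convexOn_pow even_two
      have hcomp : ConvexOn ℝ univ
          (fun y : Euc n => (y i) ^ 2) := by
        have := hsq.comp_affineMap
          (((EuclideanSpace.proj (𝕜 := ℝ) i : Euc n →L[ℝ] ℝ) : Euc n →ₗ[ℝ] ℝ).toAffineMap)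
        exact this
      have := hcomp.smul (cf_pos ha hb i).le
      simpa [smul_eq_mul] using this
    have : ConvexOn ℝ univ (fun y : Euc n => ∑ i, cf a b i * y i ^ 2) := by
      classical
      induction (Finset.univ : Finset (Fin n)) using Finset.induction with
      | empty => simpa using convexOn_const (0:ℝ) convex_univ
      | insert _ _ hni ih =>
          simp only [Finset.sum_insert hni]
          exact (hterm _).add ih
    exact this
  have := hQ.convex_le 1
  simpa using this

lemma null_level (ha : 0 < a) (hb : 0 < b) :
    volume {y : Euc n | Qf a b y = 1} = 0 := by
  have hsub : {y : Euc n | Qf a b y = 1} ⊆ frontier {y : Euc n | Qf a b y ≤ 1} := by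
    intro y hy
    rw [frontier_eq_closure_inter_closure]
    refine ⟨subset_closure (le_of_eq hy), ?_⟩
    have h1 : Tendsto (fun k : ℕ => 1 + 1/(k+1 : ℝ)) atTop (𝓝 (1 + 0)) :=
      tendsto_const_nhds.add tendsto_one_div_add_atTop_nhds_zero_nat
    have h2 : Tendsto (fun k : ℕ => (1 + 1/(k+1 : ℝ)) • y) atTop (𝓝 y) := by
      simpa using h1.smul_const y
    refine mem_closure_of_tendsto h2 ?_
    refine Filter.Eventually.of_forall fun k => ?_
    have hk : (0:ℝ) < 1/(k+1 : ℝ) := by positivity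
    have hQk : Qf a b ((1 + 1/(k+1 : ℝ)) • y) = (1 + 1/(k+1 : ℝ)) ^ 2 * Qf a b y := Qf_smul _ _
    simp only [mem_compl_iff, mem_setOf_eq, not_le, hQk]
    have hy1 : Qf a b y = 1 := hy
    nlinarith
  refine le_antisymm ?_ zero_le
  calc volume {y : Euc n | Qf a b y = 1}
      ≤ volume (frontier {y : Euc n | Qf a b y ≤ 1}) := measure_mono hsub
    _ = 0 := Convex.addHaar_frontier volume (convex_Omega ha hb)

lemma ae_ne_one (ha : 0 < a) (hb : 0 < b) :
    ∀ᵐ y : Euc n, Qf a b y ≠ 1 := by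
  rw [ae_iff]
  convert null_level (n := n) ha hb using 2
  simp

lemma omega_ae_eq_U (ha : 0 < a) (hb : 0 < b) :
    {y : Euc n | Qf a b y ≤ 1} =ᵐ[volume] {y : Euc n | Qf a b y < 1} := by
  rw [MeasureTheory.ae_eq_set]
  constructor
  · refine measure_mono_null ?_ (null_level ha hb)
    intro y hy
    exact le_antisymm hy.1 (not_lt.mp hy.2)
  · refine measure_mono_null ?_ (null_level ha hb)
    rintro y ⟨h1, h2⟩
    have h1' : Qf a b y < 1 := h1
    exact absurd (mem_setOf_eq ▸ le_of_lt h1') h2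

lemma measurableSet_U : MeasurableSet {y : Euc n | Qf a b y < 1} :=
  (isOpen_lt continuous_Qf continuous_const).measurableSet


/-! ### Derivatives of the kernel -/

lemma hasFDerivAt_nsq (z u : Euc n) :
    HasFDerivAt (fun w : Euc n => ‖w - z‖ ^ 2) ((2 : ℝ) • (innerSL ℝ (u - z))) u := by
  have h : HasFDerivAt (fun w : Euc n => w - z) (ContinuousLinearMap.id ℝ (Euc n)) u :=
    (hasFDerivAt_id u).sub_const z
  have h2 := h.norm_sq
  have he : (2 : ℕ) • ((innerSL ℝ (u - z)).comp (ContinuousLinearMap.id ℝ (Euc n)))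
      = (2 : ℝ) • (innerSL ℝ (u - z)) := by
    rw [ContinuousLinearMap.comp_id]
    ext w
    simp [two_smul, two_mul]
  rwa [he] at h2

lemma hasFDerivAt_rpow_nsq (z u : Euc n) (h : u ≠ z) (p : ℝ) :
    HasFDerivAt (fun w : Euc n => (‖w - z‖ ^ 2 : ℝ) ^ p)
      ((p * (‖u - z‖ ^ 2 : ℝ) ^ (p - 1) * 2) • innerSL ℝ (u - z)) u := by
  have hS : (‖u - z‖ ^ 2 : ℝ) ≠ 0 := by
    have huz : u - z ≠ 0 := sub_ne_zero.2 h
    have : ‖u - z‖ ≠ 0 := norm_ne_zero_iff.2 huz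
    positivity
  have hcomp := (Real.hasDerivAt_rpow_const (x := ‖u - z‖ ^ 2) (p := p)
    (Or.inl hS)).comp_hasFDerivAt u (hasFDerivAt_nsq z u)
  have he : (p * (‖u - z‖ ^ 2 : ℝ) ^ (p - 1)) • ((2 : ℝ) • innerSL ℝ (u - z))
      = (p * (‖u - z‖ ^ 2 : ℝ) ^ (p - 1) * 2) • innerSL ℝ (u - z) := by
    rw [smul_smul]
  rw [he] at hcomp
  exact hcomp

/-! ### The functions Pw, dift, ddif -/

def Pw (x y : Euc n) : ℝ := (‖y - x‖ ^ 2 : ℝ) ^ (-(n : ℝ) / 2)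

def dift (x : Euc n) (i : Fin n) (y : Euc n) : ℝ := ((n : ℝ) - 2) * (x i - y i) * Pw x y

def ddif (x : Euc n) (i : Fin n) (y : Euc n) : ℝ :=
  ((n : ℝ) - 2) *
    (-Pw x y + (n : ℝ) * (x i - y i) ^ 2 * (‖y - x‖ ^ 2 : ℝ) ^ (-(n : ℝ) / 2 - 1))

variable {x : Euc n}

lemma contDiffAt_nsq {m : WithTop ℕ∞} (x : Euc n) :
    ContDiff ℝ m (fun y : Euc n => ‖y - x‖ ^ 2) :=
  (contDiff_norm_sq ℝ).comp (contDiff_id.sub contDiff_const)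

lemma contDiffAt_Pw {y : Euc n} (h : y ≠ x) : ContDiffAt ℝ 1 (Pw x) y := by
  refine ContDiffAt.rpow_const_of_ne ((contDiffAt_nsq x).contDiffAt) ?_
  have : y - x ≠ 0 := sub_ne_zero.2 h
  have : ‖y - x‖ ≠ 0 := norm_ne_zero_iff.2 this
  positivity

lemma continuousAt_Pw {y : Euc n} (h : y ≠ x) : ContinuousAt (Pw x) y :=
  (contDiffAt_Pw h).continuousAt

lemma contDiffAt_dift {y : Euc n} (i : Fin n) (h : y ≠ x) :
    ContDiffAt ℝ 1 (dift x i) y := by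
  refine ContDiffAt.mul ?_ (contDiffAt_Pw h)
  exact (contDiff_const.mul (contDiff_const.sub
    ((EuclideanSpace.proj (𝕜 := ℝ) i).contDiff))).contDiffAt

lemma hasFDerivAt_dift {y : Euc n} (i : Fin n) (h : y ≠ x) :
    HasFDerivAt (dift x i)
      ((((n : ℝ) - 2) * (x i - y i)) •
          ((-(n : ℝ)/2 * (‖y - x‖ ^ 2 : ℝ) ^ (-(n : ℝ)/2 - 1) * 2) • innerSL ℝ (y - x))
        + Pw x y • (((n : ℝ) - 2) • (0 - (EuclideanSpace.proj (𝕜 := ℝ) i)))) y := by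
  have hc : HasFDerivAt (fun y : Euc n => ((n : ℝ) - 2) * (x i - y i))
      (((n : ℝ) - 2) • ((0 : Euc n →L[ℝ] ℝ) - (EuclideanSpace.proj (𝕜 := ℝ) i))) y := by
    refine HasFDerivAt.const_mul ?_ _
    exact (hasFDerivAt_const (x i) y).sub ((EuclideanSpace.proj (𝕜 := ℝ) i).hasFDerivAt)
  have hd : HasFDerivAt (Pw x)
      ((-(n : ℝ)/2 * (‖y - x‖ ^ 2 : ℝ) ^ (-(n : ℝ)/2 - 1) * 2) • innerSL ℝ (y - x)) y :=
    hasFDerivAt_rpow_nsq x y h _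
  exact hc.mul hd

lemma inner_single (w : Euc n) (i : Fin n) :
    ⟪w, EuclideanSpace.single i (1 : ℝ)⟫ = w i := by
  rw [PiLp.inner_apply]
  simp [EuclideanSpace.single_apply, RCLike.inner_apply, mul_comm]

lemma hasLineDerivAt_dift {y : Euc n} (i : Fin n) (h : y ≠ x) (s : ℝ) :
    HasLineDerivAt ℝ (dift x i) (s * ddif x i y) y
      (s • EuclideanSpace.single i (1 : ℝ)) := by
  have hF := (hasFDerivAt_dift i h).hasLineDerivAt (s • EuclideanSpace.single i (1 : ℝ))
  convert hF using 1
  · rfl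
  · rfl
  have e1 : (innerSL ℝ (y - x)) (s • EuclideanSpace.single i (1:ℝ)) = s * (y i - x i) := by
    rw [innerSL_apply_apply, real_inner_smul_right, inner_single, PiLp.sub_apply]
  have e2 : (EuclideanSpace.proj (𝕜 := ℝ) i) (s • EuclideanSpace.single i (1:ℝ)) = s := by
    simp [PiLp.proj_apply, PiLp.smul_apply, EuclideanSpace.single_apply]
  simp only [ContinuousLinearMap.add_apply, ContinuousLinearMap.smul_apply,
    ContinuousLinearMap.sub_apply, ContinuousLinearMap.zero_apply, e1, e2, smul_eq_mul]
  unfold ddif Pw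
  ring

/-! ### The function gam -/

def gam (a b : ℝ) (y : Euc n) : ℝ := max (1 - Qf a b y) 0

lemma gam_nonneg (y : Euc n) : 0 ≤ gam a b y := le_max_right _ _

lemma gam_le_one (ha : 0 < a) (hb : 0 < b) (y : Euc n) : gam a b y ≤ 1 :=
  max_le (by linarith [Qf_nonneg ha hb y]) zero_le_one

lemma gam_eq_zero {y : Euc n} (h : 1 ≤ Qf a b y) : gam a b y = 0 :=
  max_eq_right (by linarith)

lemma gam_eq {y : Euc n} (h : Qf a b y ≤ 1) : gam a b y = 1 - Qf a b y :=
  max_eq_left (by linarith)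

lemma sum_abs_mul_abs_le (u v : Euc n) : ∑ i, |u i| * |v i| ≤ ‖u‖ * ‖v‖ := by
  have h := real_inner_le_norm (WithLp.toLp 2 (fun i => |u i|) : Euc n) (WithLp.toLp 2 (fun i => |v i|) : Euc n)
  have h1 : ⟪(WithLp.toLp 2 (fun i => |u i|) : Euc n), (WithLp.toLp 2 (fun i => |v i|) : Euc n)⟫
      = ∑ i, |u i| * |v i| := by
    rw [PiLp.inner_apply]
    simp [RCLike.inner_apply, mul_comm]
  have h2 : ‖(WithLp.toLp 2 (fun i => |u i|) : Euc n)‖ = ‖u‖ := by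
    rw [EuclideanSpace.norm_eq, EuclideanSpace.norm_eq]
    congr 1
    refine Finset.sum_congr rfl fun i _ => ?_
    simp [sq_abs]
  have h3 : ‖(WithLp.toLp 2 (fun i => |v i|) : Euc n)‖ = ‖v‖ := by
    rw [EuclideanSpace.norm_eq, EuclideanSpace.norm_eq]
    congr 1
    refine Finset.sum_congr rfl fun i _ => ?_
    simp [sq_abs]
  rw [h1, h2, h3] at h
  exact h

lemma abs_Qf_sub (ha : 0 < a) (hb : 0 < b) (y z : Euc n) :
    |Qf a b y - Qf a b z| ≤ max (a ^ 2)⁻¹ (b ^ 2)⁻¹ * ((‖y‖ + ‖z‖) * ‖y - z‖) := by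
  set C2 := max (a ^ 2)⁻¹ (b ^ 2)⁻¹ with hC2
  have hC2pos : 0 < C2 := lt_max_of_lt_left (by positivity)
  have h1 : Qf a b y - Qf a b z = ∑ i, cf a b i * ((y i + z i) * (y i - z i)) := by
    unfold Qf
    rw [← Finset.sum_sub_distrib]
    refine Finset.sum_congr rfl fun i _ => ?_
    ring
  rw [h1]
  calc |∑ i, cf a b i * ((y i + z i) * (y i - z i))|
      ≤ ∑ i, |cf a b i * ((y i + z i) * (y i - z i))| := Finset.abs_sum_le_sum_abs _ _
    _ ≤ ∑ i, C2 * (|(y + z) i| * |(y - z) i|) := by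
        refine Finset.sum_le_sum fun i _ => ?_
        rw [abs_mul, abs_mul]
        have hcf : |cf a b i| ≤ C2 := by
          rw [abs_of_pos (cf_pos ha hb i)]
          unfold cf
          split
          · exact le_max_left _ _
          · exact le_max_right _ _
        have h2 : |(y + z) i| = |y i + z i| := by rw [PiLp.add_apply]
        have h3 : |(y - z) i| = |y i - z i| := by rw [PiLp.sub_apply]
        rw [h2, h3]
        exact mul_le_mul hcf le_rfl (by positivity) hC2pos.le
    _ = C2 * ∑ i, |(y + z) i| * |(y - z) i| := by rw [Finset.mul_sum]
    _ ≤ C2 * (‖y + z‖ * ‖y - z‖) := by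
        refine mul_le_mul_of_nonneg_left (sum_abs_mul_abs_le _ _) hC2pos.le
    _ ≤ C2 * ((‖y‖ + ‖z‖) * ‖y - z‖) := by
        refine mul_le_mul_of_nonneg_left ?_ hC2pos.le
        exact mul_le_mul_of_nonneg_right (norm_add_le y z) (norm_nonneg _)

lemma abs_gam_sub (y z : Euc n) : |gam a b y - gam a b z| ≤ |Qf a b y - Qf a b z| := by
  unfold gam
  have := abs_max_sub_max_le_abs (1 - Qf a b y) (1 - Qf a b z) 0
  calc |max (1 - Qf a b y) 0 - max (1 - Qf a b z) 0| ≤ |(1 - Qf a b y) - (1 - Qf a b z)| := this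
    _ = |Qf a b z - Qf a b y| := by ring_nf
    _ = |Qf a b y - Qf a b z| := abs_sub_comm _ _

lemma norm_le_of_gam_ne (ha : 0 < a) (hb : 0 < b) {y : Euc n} (h : gam a b y ≠ 0) :
    ‖y‖ ≤ max a b := by
  have hQ : Qf a b y < 1 := by
    by_contra hc
    exact h (gam_eq_zero (not_lt.mp hc))
  have h1 : ‖y‖ ^ 2 ≤ max (a ^ 2) (b ^ 2) * Qf a b y := norm_sq_le_Qf ha hb y
  have h2 : max (a ^ 2) (b ^ 2) ≤ (max a b) ^ 2 := by
    rcases le_total a b with hab | hab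
    · rw [max_eq_right hab, max_eq_right (by nlinarith)]
    · rw [max_eq_left hab, max_eq_left (by nlinarith)]
  have h3 : ‖y‖ ^ 2 ≤ (max a b) ^ 2 := by
    have hQ0 := Qf_nonneg ha hb y
    have hmaxpos : (0:ℝ) < max (a ^ 2) (b ^ 2) := lt_max_iff.2 (Or.inl (by positivity))
    nlinarith
  have hM : 0 ≤ max a b := le_max_of_le_left ha.le
  rw [← Real.sqrt_sq (norm_nonneg y), ← Real.sqrt_sq hM]
  exact Real.sqrt_le_sqrt h3

lemma lipschitz_gam (ha : 0 < a) (hb : 0 < b) :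
    ∃ C : ℝ≥0, LipschitzWith C (gam a b (n := n)) := by
  set M := max a b with hM
  have hM0 : 0 < M := lt_max_of_lt_left ha
  set C2 := max (a ^ 2)⁻¹ (b ^ 2)⁻¹ with hC2
  have hC2pos : 0 < C2 := lt_max_of_lt_left (by positivity)
  set L := C2 * (2 * M + 1) with hL
  have hL0 : 0 < L := by positivity
  refine ⟨Real.toNNReal (max L 1), LipschitzWith.of_dist_le_mul fun y z => ?_⟩
  have hK : (Real.toNNReal (max L 1) : ℝ) = max L 1 :=
    Real.coe_toNNReal _ (le_trans zero_le_one (le_max_right _ _))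
  rw [Real.dist_eq, dist_eq_norm, hK]
  rcases le_or_gt ‖y - z‖ 1 with hyz | hyz
  · by_cases hzero : gam a b y = 0 ∧ gam a b z = 0
    · rw [hzero.1, hzero.2, sub_zero, abs_zero]
      positivity
    · have hbound : ‖y‖ + ‖z‖ ≤ 2 * M + 1 := by
        rcases not_and_or.mp hzero with h | h
        · have h1 : ‖y‖ ≤ M := norm_le_of_gam_ne ha hb h
          have h2 : ‖z‖ ≤ ‖y‖ + ‖y - z‖ := by
            calc ‖z‖ = ‖y - (y - z)‖ := by congr 1; abel
              _ ≤ ‖y‖ + ‖y - z‖ := norm_sub_le _ _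
          linarith
        · have h1 : ‖z‖ ≤ M := norm_le_of_gam_ne ha hb h
          have h2 : ‖y‖ ≤ ‖z‖ + ‖y - z‖ := by
            calc ‖y‖ = ‖z + (y - z)‖ := by congr 1; abel
              _ ≤ ‖z‖ + ‖y - z‖ := norm_add_le _ _
          linarith
      calc |gam a b y - gam a b z| ≤ |Qf a b y - Qf a b z| := abs_gam_sub y z
        _ ≤ C2 * ((‖y‖ + ‖z‖) * ‖y - z‖) := abs_Qf_sub ha hb y z
        _ ≤ C2 * ((2 * M + 1) * ‖y - z‖) := by
            refine mul_le_mul_of_nonneg_left ?_ hC2pos.le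
            exact mul_le_mul_of_nonneg_right hbound (norm_nonneg _)
        _ = L * ‖y - z‖ := by rw [hL]; ring
        _ ≤ max L 1 * ‖y - z‖ :=
            mul_le_mul_of_nonneg_right (le_max_left _ _) (norm_nonneg _)
  · have h1 : |gam a b y - gam a b z| ≤ 1 := by
      rw [abs_sub_le_iff]
      constructor
      · linarith [gam_le_one ha hb y, gam_nonneg (a := a) (b := b) z]
      · linarith [gam_le_one ha hb z, gam_nonneg (a := a) (b := b) y]
    calc |gam a b y - gam a b z| ≤ 1 := h1
      _ ≤ max L 1 * ‖y - z‖ := by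
          have : (1:ℝ) ≤ max L 1 := le_max_right _ _
          nlinarith

lemma hasLineDerivAt_gam (ha : 0 < a) (hb : 0 < b) {y : Euc n} (h : Qf a b y < 1) (i : Fin n) :
    HasLineDerivAt ℝ (gam a b) (-(2 * cf a b i * y i)) y (EuclideanSpace.single i (1 : ℝ)) := by
  have hpoly : HasDerivAt
      (fun t : ℝ => 1 - (Qf a b y + 2 * cf a b i * y i * t + cf a b i * t ^ 2))
      (-(2 * cf a b i * y i)) 0 := by
    have h1 : HasDerivAt (fun t : ℝ => Qf a b y + 2 * cf a b i * y i * t + cf a b i * t ^ 2)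
        (2 * cf a b i * y i) 0 := by
      have ht : HasDerivAt (fun t : ℝ => t) 1 0 := hasDerivAt_id 0
      have hsq : HasDerivAt (fun t : ℝ => t ^ 2) (2 * 0 ^ (2 - 1)) 0 := hasDerivAt_pow 2 0
      have := ((ht.const_mul (2 * cf a b i * y i)).add (hsq.const_mul (cf a b i))).const_add
        (Qf a b y)
      convert this using 1
      · rfl
      · rfl
      · funext t; simp only [Pi.add_apply]; ring
      · simp
    simpa using (h1.const_sub 1)
  have hev : (fun t : ℝ => gam a b (y + t • EuclideanSpace.single i (1 : ℝ))) =ᶠ[𝓝 (0:ℝ)]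
      (fun t : ℝ => 1 - (Qf a b y + 2 * cf a b i * y i * t + cf a b i * t ^ 2)) := by
    have hcont : ContinuousAt
        (fun t : ℝ => Qf a b y + 2 * cf a b i * y i * t + cf a b i * t ^ 2) 0 := by
      fun_prop
    have hval : Qf a b y + 2 * cf a b i * y i * 0 + cf a b i * 0 ^ 2 < 1 := by
      simpa using h
    have hlt : ∀ᶠ t : ℝ in 𝓝 0,
        Qf a b y + 2 * cf a b i * y i * t + cf a b i * t ^ 2 < 1 :=
      hcont.eventually_lt_const hval
    filter_upwards [hlt] with t ht
    rw [gam_eq (by rw [Qf_add_single]; linarith), Qf_add_single]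
  exact HasDerivAt.congr_of_eventuallyEq hpoly hev

lemma hasLineDerivAt_gam_zero {y : Euc n} (h : 1 < Qf a b y) (v : Euc n) :
    HasLineDerivAt ℝ (gam a b) 0 y v := by
  have hcont : ContinuousAt (fun t : ℝ => Qf a b (y + t • v)) 0 := by
    refine continuous_Qf.continuousAt.comp ?_
    fun_prop
  have hval : Qf a b (y + (0:ℝ) • v) > 1 := by simpa using h
  have hlt : ∀ᶠ t : ℝ in 𝓝 0, 1 < Qf a b (y + t • v) := hcont.eventually_const_lt hval
  have hev : (fun t : ℝ => gam a b (y + t • v)) =ᶠ[𝓝 (0:ℝ)] (fun _ : ℝ => (0:ℝ)) := by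
    filter_upwards [hlt] with t ht
    exact gam_eq_zero ht.le
  exact HasDerivAt.congr_of_eventuallyEq (hasDerivAt_const 0 0) hev

/-! ### The cutoff chi and hfun -/

def chi (a b δ : ℝ) (y : Euc n) : ℝ :=
  Real.smoothTransition ((1 + 2 * δ - Qf a b y) / δ)

variable {δ : ℝ}

lemma chi_eq_one (hδ : 0 < δ) {y : Euc n} (h : Qf a b y ≤ 1 + δ) : chi a b δ y = 1 :=
  Real.smoothTransition.one_of_one_le (by rw [le_div_iff₀ hδ]; linarith)

lemma chi_eq_zero (hδ : 0 < δ) {y : Euc n} (h : 1 + 2 * δ ≤ Qf a b y) : chi a b δ y = 0 :=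
  Real.smoothTransition.zero_of_nonpos
    (div_nonpos_of_nonpos_of_nonneg (by linarith) hδ.le)

lemma contDiff_chi : ContDiff ℝ 1 (chi a b δ (n := n)) := by
  have h1 : ContDiff ℝ 1 (fun y : Euc n => (1 + 2 * δ - Qf a b y) / δ) :=
    (contDiff_const.sub contDiff_Qf).div_const δ
  have h2 : ContDiff ℝ ((1 : ℕ∞) : WithTop ℕ∞) Real.smoothTransition :=
    Real.smoothTransition.contDiff
  exact (h2.of_le (by exact_mod_cast le_rfl)).comp h1

def hfun (a b δ : ℝ) (x : Euc n) (i : Fin n) (y : Euc n) : ℝ := chi a b δ y * dift x i y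

lemma hasCompactSupport_hfun (ha : 0 < a) (hb : 0 < b) (hδ : 0 < δ) (i : Fin n) :
    HasCompactSupport (hfun a b δ x i) := by
  refine HasCompactSupport.intro (isCompact_sub ha hb (1 + 2 * δ)) fun y hy => ?_
  have : 1 + 2 * δ ≤ Qf a b y := le_of_lt (not_le.mp hy)
  rw [hfun, chi_eq_zero hδ this, zero_mul]

lemma contDiff_hfun (ha : 0 < a) (hb : 0 < b) (hδ : 0 < δ)
    (hx3 : 1 + 2 * δ < Qf a b x) (i : Fin n) :
    ContDiff ℝ 1 (hfun a b δ x i) := by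
  rw [contDiff_iff_contDiffAt]
  intro y
  by_cases hy : 1 + 2 * δ < Qf a b y
  · have hlt : ∀ᶠ z in 𝓝 y, 1 + 2 * δ < Qf a b z :=
      continuous_Qf.continuousAt.eventually_const_lt hy
    refine ContDiffAt.congr_of_eventuallyEq (contDiffAt_const (c := (0:ℝ))) ?_
    filter_upwards [hlt] with z hz
    rw [hfun, chi_eq_zero hδ hz.le, zero_mul]
  · have hne : y ≠ x := by
      intro he
      rw [he] at hy
      exact hy hx3
    exact (contDiff_chi.contDiffAt).mul (contDiffAt_dift i hne)

lemma lipschitz_hfun (ha : 0 < a) (hb : 0 < b) (hδ : 0 < δ)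
    (hx3 : 1 + 2 * δ < Qf a b x) (i : Fin n) :
    ∃ C : ℝ≥0, LipschitzWith C (hfun a b δ x i) :=
  (contDiff_hfun ha hb hδ hx3 i).lipschitzWith_of_hasCompactSupport
    (hasCompactSupport_hfun ha hb hδ i) one_ne_zero


/-! ### Harmonicity: sum of second line derivatives vanishes -/

lemma sum_ddif (hn : 3 ≤ n) {y : Euc n} (h : y ≠ x) : ∑ i, ddif x i y = 0 := by
  have hyx : y - x ≠ 0 := sub_ne_zero.2 h
  have hS0 : (0:ℝ) < ‖y - x‖ ^ 2 := by
    have : ‖y - x‖ ≠ 0 := norm_ne_zero_iff.2 hyx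
    positivity
  have hsum_sq : ∑ i, (x i - y i) ^ 2 = (‖y - x‖ ^ 2 : ℝ) := by
    rw [← norm_sub_rev, norm_sq_eq (x - y)]
    refine Finset.sum_congr rfl fun i _ => ?_
    rw [PiLp.sub_apply]
  have hTS : (‖y - x‖ ^ 2 : ℝ) ^ (-(n : ℝ)/2 - 1) * (‖y - x‖ ^ 2 : ℝ) = Pw x y := by
    rw [← Real.rpow_add_one hS0.ne' (-(n : ℝ)/2 - 1), Pw]
    congr 1
    ring
  unfold ddif
  rw [← Finset.mul_sum]
  have hz : ∑ i, (-Pw x y + (n : ℝ) * (x i - y i) ^ 2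
      * (‖y - x‖ ^ 2 : ℝ) ^ (-(n : ℝ)/2 - 1)) = 0 := by
    rw [Finset.sum_add_distrib, Finset.sum_const, Finset.card_univ, Fintype.card_fin]
    have h2 : ∑ i, (n : ℝ) * (x i - y i) ^ 2 * (‖y - x‖ ^ 2 : ℝ) ^ (-(n : ℝ)/2 - 1)
        = (n : ℝ) * ((‖y - x‖ ^ 2 : ℝ) ^ (-(n : ℝ)/2 - 1) * (‖y - x‖ ^ 2 : ℝ)) := by
      rw [← hsum_sq, Finset.mul_sum, Finset.mul_sum]
      refine Finset.sum_congr rfl fun i _ => ?_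
      ring
    rw [h2, hTS, nsmul_eq_mul]
    ring
  rw [hz, mul_zero]

/-! ### The key integral identity (integration by parts / Rademacher) -/

lemma star (ha : 0 < a) (hb : 0 < b) (hn : 3 ≤ n) {x : Euc n} (hQx : 1 < Qf a b x) :
    ∫ y in {y : Euc n | Qf a b y < 1}, (∑ i, cf a b i * y i * (x i - y i)) * Pw x y = 0 := by
  set δ := (Qf a b x - 1)/3 with hδdef
  have hδ : 0 < δ := by rw [hδdef]; linarith
  have hx3 : 1 + 2 * δ < Qf a b x := by rw [hδdef]; linarith
  set U := {y : Euc n | Qf a b y < 1} with hU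
  set Ω := {y : Euc n | Qf a b y ≤ 1} with hΩ
  have hUmeas : MeasurableSet U := measurableSet_U
  have hΩcomp : IsCompact Ω := isCompact_sub ha hb 1
  have hUsub : U ⊆ Ω := fun y hy => show Qf a b y ≤ 1 from le_of_lt hy
  have hyne : ∀ y ∈ Ω, y ≠ x := by
    intro y hy he
    rw [he] at hy
    exact absurd hQx (not_lt.mpr hy)
  -- continuity facts on Ω
  have hPcont : ContinuousOn (Pw x) Ω := fun y hy =>
    (continuousAt_Pw (hyne y hy)).continuousWithinAt
  have hdiftcont : ∀ i, ContinuousOn (dift x i) Ω := fun i y hy =>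
    ((contDiffAt_dift i (hyne y hy)).continuousAt).continuousWithinAt
  have hddifcont : ∀ i, ContinuousOn (ddif x i) Ω := by
    intro i y hy
    have hne := hyne y hy
    have hS0 : (‖y - x‖ ^ 2 : ℝ) ≠ 0 := by
      have : ‖y - x‖ ≠ 0 := norm_ne_zero_iff.2 (sub_ne_zero.2 hne)
      positivity
    have hT : ContinuousAt (fun z : Euc n => (‖z - x‖ ^ 2 : ℝ) ^ (-(n : ℝ)/2 - 1)) y :=
      ContinuousAt.rpow_const (((contDiffAt_nsq (m := 1) x).continuous).continuousAt) (Or.inl hS0)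
    have : ContinuousAt (ddif x i) y := by
      unfold ddif
      refine ContinuousAt.mul continuousAt_const ?_
      refine ContinuousAt.add (ContinuousAt.neg (continuousAt_Pw hne)) ?_
      refine ContinuousAt.mul ?_ hT
      refine ContinuousAt.mul continuousAt_const ?_
      exact (ContinuousAt.pow (ContinuousAt.sub continuousAt_const
        ((EuclideanSpace.proj (𝕜 := ℝ) i).continuous.continuousAt)) 2)
    exact this.continuousWithinAt
  -- integrable families
  have hLint : ∀ i : Fin n, IntegrableOn
      (fun y : Euc n => (-(2 * cf a b i * y i)) * dift x i y) U volume := by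
    intro i
    refine (ContinuousOn.integrableOn_compact hΩcomp ?_).mono_set hUsub
    refine ContinuousOn.mul ?_ (hdiftcont i)
    exact Continuous.continuousOn
      (Continuous.neg (continuous_const.mul ((EuclideanSpace.proj (𝕜 := ℝ) i).continuous)))
  have hRint : ∀ i : Fin n, IntegrableOn
      (fun y : Euc n => (-(ddif x i y)) * (1 - Qf a b y)) U volume := by
    intro i
    refine (ContinuousOn.integrableOn_compact hΩcomp ?_).mono_set hUsub
    refine ContinuousOn.mul ((hddifcont i).neg) ?_
    exact Continuous.continuousOn (continuous_const.sub continuous_Qf)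
  -- per-index integration by parts
  have key : ∀ i : Fin n,
      ∫ y in U, (-(2 * cf a b i * y i)) * dift x i y
        = ∫ y in U, (-(ddif x i y)) * (1 - Qf a b y) := by
    intro i
    obtain ⟨Cg, hCg⟩ := lipschitz_gam (n := n) ha hb
    obtain ⟨Ch, hCh⟩ := lipschitz_hfun (x := x) ha hb hδ hx3 i
    have hIBP := hCg.integral_lineDeriv_mul_eq (μ := volume) hCh (hasCompactSupport_hfun ha hb hδ i)
      (EuclideanSpace.single i (1 : ℝ))
    have hL : (fun y : Euc n => lineDeriv ℝ (gam a b) y (EuclideanSpace.single i (1:ℝ))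
        * hfun a b δ x i y)
        =ᵐ[volume] U.indicator (fun y => (-(2 * cf a b i * y i)) * dift x i y) := by
      filter_upwards [ae_ne_one (n := n) ha hb] with y hy
      rcases lt_or_gt_of_ne hy with hlt | hgt
      · rw [Set.indicator_of_mem (show y ∈ U from hlt)]
        rw [(hasLineDerivAt_gam ha hb hlt i).lineDeriv]
        rw [hfun, chi_eq_one hδ (by linarith), one_mul]
      · rw [Set.indicator_of_notMem (show y ∉ U from not_lt.mpr hgt.le)]
        rw [(hasLineDerivAt_gam_zero hgt _).lineDeriv, zero_mul]
    have hR : (fun y : Euc n => lineDeriv ℝ (hfun a b δ x i) y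
        (-(EuclideanSpace.single i (1:ℝ))) * gam a b y)
        =ᵐ[volume] U.indicator (fun y => (-(ddif x i y)) * (1 - Qf a b y)) := by
      filter_upwards [ae_ne_one (n := n) ha hb] with y hy
      rcases lt_or_gt_of_ne hy with hlt | hgt
      · rw [Set.indicator_of_mem (show y ∈ U from hlt)]
        have hne : y ≠ x := hyne y (hUsub hlt)
        have hev : hfun a b δ x i =ᶠ[𝓝 y] dift x i := by
          have hev1 : ∀ᶠ z in 𝓝 y, Qf a b z < 1 + δ :=
            continuous_Qf.continuousAt.eventually_lt_const (by linarith)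
          filter_upwards [hev1] with z hz
          rw [hfun, chi_eq_one hδ hz.le, one_mul]
        rw [hev.lineDeriv_eq]
        have hld := hasLineDerivAt_dift (x := x) i hne (-1)
        rw [neg_smul, one_smul] at hld
        rw [hld.lineDeriv, gam_eq (le_of_lt hlt)]
        ring
      · rw [Set.indicator_of_notMem (show y ∉ U from not_lt.mpr hgt.le)]
        rw [gam_eq_zero hgt.le, mul_zero]
    rw [integral_congr_ae hL, integral_congr_ae hR, integral_indicator hUmeas,
      integral_indicator hUmeas] at hIBP
    exact hIBP
  -- sum over i
  have hsumL : ∑ i, ∫ y in U, (-(2 * cf a b i * y i)) * dift x i y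
      = ∫ y in U, ∑ i, (-(2 * cf a b i * y i)) * dift x i y :=
    (integral_finset_sum Finset.univ fun i _ => hLint i).symm
  have hsumR : ∑ i, ∫ y in U, (-(ddif x i y)) * (1 - Qf a b y)
      = ∫ y in U, ∑ i, (-(ddif x i y)) * (1 - Qf a b y) :=
    (integral_finset_sum Finset.univ fun i _ => hRint i).symm
  have hRzero : ∫ y in U, ∑ i, (-(ddif x i y)) * (1 - Qf a b y) = 0 := by
    have hz : ∀ y ∈ U, ∑ i, (-(ddif x i y)) * (1 - Qf a b y) = (0:ℝ) := by
      intro y hy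
      have hne : y ≠ x := hyne y (hUsub hy)
      have h1 : ∑ i, (-(ddif x i y)) * (1 - Qf a b y)
          = (-(1 - Qf a b y)) * ∑ i, ddif x i y := by
        rw [Finset.mul_sum]
        refine Finset.sum_congr rfl fun i _ => ?_
        ring
      rw [h1, sum_ddif hn hne, mul_zero]
    calc ∫ y in U, ∑ i, (-(ddif x i y)) * (1 - Qf a b y)
        = ∫ _y in U, (0:ℝ) := MeasureTheory.setIntegral_congr_fun hUmeas hz
      _ = 0 := by simp
  have hLptwise : ∀ y : Euc n, ∑ i, (-(2 * cf a b i * y i)) * dift x i y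
      = (-2 * ((n:ℝ) - 2)) * ((∑ i, cf a b i * y i * (x i - y i)) * Pw x y) := by
    intro y
    rw [Finset.sum_mul, Finset.mul_sum]
    refine Finset.sum_congr rfl fun i _ => ?_
    unfold dift
    ring
  have hLeq : ∫ y in U, ∑ i, (-(2 * cf a b i * y i)) * dift x i y
      = (-2 * ((n:ℝ) - 2)) * ∫ y in U, (∑ i, cf a b i * y i * (x i - y i)) * Pw x y := by
    rw [← integral_const_mul]
    exact MeasureTheory.setIntegral_congr_fun hUmeas fun y _ => hLptwise y
  have hfinal : (-2 * ((n:ℝ) - 2)) *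
      (∫ y in U, (∑ i, cf a b i * y i * (x i - y i)) * Pw x y) = 0 := by
    rw [← hLeq, ← hsumL]
    rw [show (∑ i, ∫ y in U, (-(2 * cf a b i * y i)) * dift x i y)
      = ∑ i, ∫ y in U, (-(ddif x i y)) * (1 - Qf a b y) from Finset.sum_congr rfl fun i _ => key i]
    rw [hsumR, hRzero]
  have hne2 : (-2 * ((n:ℝ) - 2)) ≠ 0 := by
    have : (3:ℝ) ≤ (n:ℝ) := by exact_mod_cast hn
    intro hc
    rcases mul_eq_zero.mp hc with hc | hc
    · norm_num at hc
    · linarith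
  exact (mul_eq_zero.mp hfinal).resolve_left hne2


/-! ### Differentiation under the integral sign -/

lemma Pw_eq (x y : Euc n) : Pw x y = (‖x - y‖ ^ 2 : ℝ) ^ (-(n : ℝ)/2) := by
  rw [Pw, norm_sub_rev]

lemma Qf_zero : Qf a b (0 : Euc n) = 0 := by
  unfold Qf
  refine Finset.sum_eq_zero fun i _ => ?_
  have : (0 : Euc n) i = 0 := rfl
  rw [this]
  ring

lemma hasFDerivAt_coulPot (hn : 3 ≤ n) (ha : 0 < a) (hb : 0 < b) {x : Euc n}
    (hx : x ∉ sphSet n a b) :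
    Integrable (fun y : Euc n =>
        ((((2:ℝ) - n)/2 * ((‖x - y‖ ^ 2 : ℝ) ^ (-(n:ℝ)/2)) * 2) • innerSL ℝ (x - y)))
      (volume.restrict (sphSet n a b)) ∧
    HasFDerivAt (coulPot n a b)
      ((volume (sphSet n a b)).toReal⁻¹ •
        ∫ y in sphSet n a b,
          ((((2:ℝ) - n)/2 * ((‖x - y‖ ^ 2 : ℝ) ^ (-(n:ℝ)/2)) * 2) • innerSL ℝ (x - y))) x := by
  set Ω := sphSet n a b with hΩdef
  have hΩeq : Ω = {y : Euc n | Qf a b y ≤ 1} := sphSet_eq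
  have hΩcomp : IsCompact Ω := hΩeq ▸ isCompact_sub ha hb 1
  have hΩclosed : IsClosed Ω := hΩcomp.isClosed
  have hΩmeas : MeasurableSet Ω := hΩclosed.measurableSet
  have hΩne : Ω.Nonempty := ⟨0, by rw [hΩeq]; simp only [mem_setOf_eq, Qf_zero]; norm_num⟩
  have hd : 0 < Metric.infDist x Ω := (hΩclosed.notMem_iff_infDist_pos hΩne).mp hx
  set ε := Metric.infDist x Ω / 2 with hεdef
  have hε : 0 < ε := by rw [hεdef]; linarith
  have hfar : ∀ u ∈ Metric.ball x ε, ∀ y ∈ Ω, ε ≤ ‖u - y‖ := by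
    intro u hu y hy
    have h1 : Metric.infDist x Ω ≤ dist x y := Metric.infDist_le_dist_of_mem hy
    have h2 : dist u x < ε := Metric.mem_ball.mp hu
    have h3 : dist x y ≤ dist x u + dist u y := dist_triangle x u y
    rw [← dist_eq_norm]
    rw [dist_comm] at h2
    have h4 : Metric.infDist x Ω = 2 * ε := by rw [hεdef]; ring
    linarith
  have hxball : x ∈ Metric.ball x ε := Metric.mem_ball_self hε
  haveI : IsFiniteMeasure (volume.restrict Ω) :=
    ⟨by rw [Measure.restrict_apply_univ]; exact hΩcomp.measure_lt_top⟩
  set p : ℝ := ((2:ℝ) - n)/2 with hpdef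
  have hp1 : p - 1 = -(n:ℝ)/2 := by rw [hpdef]; ring
  -- continuity of u ↦ F u on Ω for u in the ball
  have hcontF : ∀ u ∈ Metric.ball x ε,
      ContinuousOn (fun y : Euc n => (‖u - y‖ ^ 2 : ℝ) ^ p) Ω := by
    intro u hu y hy
    have hne : (‖u - y‖ ^ 2 : ℝ) ≠ 0 := by
      have h0 : (0:ℝ) < ‖u - y‖ := lt_of_lt_of_le hε (hfar u hu y hy)
      positivity
    refine ContinuousAt.continuousWithinAt ?_
    refine ContinuousAt.rpow_const ?_ (Or.inl hne)
    have : Continuous (fun y : Euc n => ‖u - y‖ ^ 2) := by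
      have h1 : Continuous (fun y : Euc n => u - y) := continuous_const.sub continuous_id
      exact (continuous_norm.comp h1).pow 2
    exact this.continuousAt
  have hmain := hasFDerivAt_integral_of_dominated_loc_of_lip
    (F := fun (u : Euc n) (y : Euc n) => (‖u - y‖ ^ 2 : ℝ) ^ p)
    (F' := fun y : Euc n => ((p * ((‖x - y‖ ^ 2 : ℝ) ^ (-(n:ℝ)/2)) * 2) • innerSL ℝ (x - y)))
    (x₀ := x) (bound := fun _ => ((n:ℝ) - 2) * ε ^ ((1:ℝ) - n))
    (μ := volume.restrict Ω) (s := Metric.ball x ε) (Metric.ball_mem_nhds x hε) ?_ ?_ ?_ ?_ ?_ ?_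
  · constructor
    · exact hmain.1
    · have hrw : coulPot n a b
          = fun u : Euc n => (volume Ω).toReal⁻¹ * ∫ y in Ω, (‖u - y‖ ^ 2 : ℝ) ^ p := by
        funext u
        rw [coulPot]
        congr 1
        refine integral_congr_ae (Filter.Eventually.of_forall fun y => ?_)
        rw [hpdef]
        exact (kernel_rpow hn (u - y)).symm
      rw [hrw]
      exact (hmain.2).const_mul _
  · -- eventual measurability
    filter_upwards [Metric.ball_mem_nhds x hε] with u hu
    exact ContinuousOn.aestronglyMeasurable (hcontF u hu) hΩmeas
  · -- integrability of F x
    exact ContinuousOn.integrableOn_compact hΩcomp (hcontF x hxball)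
  · -- measurability of F'
    refine ContinuousOn.aestronglyMeasurable ?_ hΩmeas
    refine ContinuousOn.smul (f := fun y : Euc n => p * ((‖x - y‖ ^ 2 : ℝ) ^ (-(n:ℝ)/2)) * 2)
      (g := fun y : Euc n => innerSL ℝ (x - y)) ?_ ?_
    · intro y hy
      have hne : (‖x - y‖ ^ 2 : ℝ) ≠ 0 := by
        have h0 : (0:ℝ) < ‖x - y‖ := lt_of_lt_of_le hε (hfar x hxball y hy)
        positivity
      refine ContinuousAt.continuousWithinAt ?_
      refine ContinuousAt.mul (ContinuousAt.mul continuousAt_const ?_) continuousAt_const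
      refine ContinuousAt.rpow_const ?_ (Or.inl hne)
      have : Continuous (fun y : Euc n => ‖x - y‖ ^ 2) := by
        have h1 : Continuous (fun y : Euc n => x - y) := continuous_const.sub continuous_id
        exact (continuous_norm.comp h1).pow 2
      exact this.continuousAt
    · refine Continuous.continuousOn ?_
      exact (innerSL ℝ).continuous.comp (continuous_const.sub continuous_id)
  · -- Lipschitz bound
    refine ae_restrict_of_forall_mem hΩmeas fun y hy => ?_
    have hlip : LipschitzOnWith (Real.nnabs (((n:ℝ) - 2) * ε ^ ((1:ℝ) - n)))
        (fun u : Euc n => (‖u - y‖ ^ 2 : ℝ) ^ p) (Metric.ball x ε) := by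
      refine Convex.lipschitzOnWith_of_nnnorm_hasFDerivWithin_le
        (f' := fun u : Euc n => ((p * ((‖u - y‖ ^ 2 : ℝ) ^ (p - 1)) * 2) • innerSL ℝ (u - y)))
        (fun u hu => ?_) (fun u hu => ?_) (convex_ball x ε)
      · have hne : u ≠ y := by
          intro he
          have := hfar u hu y hy
          rw [he, sub_self, norm_zero] at this
          linarith
        exact (hasFDerivAt_rpow_nsq y u hne p).hasFDerivWithinAt
      · have hry : ε ≤ ‖u - y‖ := hfar u hu y hy
        have hr0 : (0:ℝ) < ‖u - y‖ := lt_of_lt_of_le hε hry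
        rw [← NNReal.coe_le_coe, coe_nnnorm, Real.coe_nnabs]
        rw [norm_smul, innerSL_apply_norm]
        have h1 : ‖p * (‖u - y‖ ^ 2 : ℝ) ^ (p - 1) * 2‖ * ‖u - y‖
            = ((n:ℝ) - 2) * ‖u - y‖ ^ ((1:ℝ) - n) := by
          have hnr : (3:ℝ) ≤ (n:ℝ) := by exact_mod_cast hn
          have habs : ‖p * (‖u - y‖ ^ 2 : ℝ) ^ (p - 1) * 2‖
              = ((n:ℝ) - 2)/2 * (‖u - y‖ ^ 2 : ℝ) ^ (p - 1) * 2 := by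
            rw [Real.norm_eq_abs, abs_mul, abs_mul]
            rw [abs_of_nonpos (by rw [hpdef]; linarith), abs_of_nonneg (by positivity),
              abs_of_nonneg (by norm_num : (0:ℝ) ≤ 2)]
            rw [hpdef]
            ring
          rw [habs, hp1]
          have h2 : ((‖u - y‖ ^ 2 : ℝ) ^ (-(n:ℝ)/2)) * ‖u - y‖
              = ‖u - y‖ ^ ((1:ℝ) - n) := by
            rw [← Real.rpow_natCast ‖u - y‖ 2, ← Real.rpow_mul hr0.le]
            nth_rewrite 2 [← Real.rpow_one ‖u - y‖]
            rw [← Real.rpow_add hr0]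
            congr 1
            push_cast
            ring
          rw [mul_assoc, mul_comm (2:ℝ) ‖u - y‖, ← mul_assoc, mul_assoc _ _ ‖u - y‖, h2]
          ring
        rw [h1, abs_of_nonneg]
        · refine mul_le_mul_of_nonneg_left ?_ (by
            have hnr : (3:ℝ) ≤ (n:ℝ) := by exact_mod_cast hn
            linarith)
          refine Real.rpow_le_rpow_of_nonpos hε hry ?_
          have hnr : (3:ℝ) ≤ (n:ℝ) := by exact_mod_cast hn
          linarith
        · have hnr : (3:ℝ) ≤ (n:ℝ) := by exact_mod_cast hn
          have : (0:ℝ) < ε ^ ((1:ℝ) - n) := Real.rpow_pos_of_pos hε _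
          nlinarith
    exact hlip
  · exact integrable_const _
  · -- a.e. differentiability at x
    refine ae_restrict_of_forall_mem hΩmeas fun y hy => ?_
    have hne : x ≠ y := by
      intro he
      have := hfar x hxball y hy
      rw [he, sub_self, norm_zero] at this
      linarith
    have := hasFDerivAt_rpow_nsq y x hne p
    rwa [hp1] at this


/-! ### The algebraic bracket identity -/

lemma bracket (ha : a ≠ 0) (hb : b ≠ 0) (x y : Euc n) :
    (a^2 - b^2) * (x 0 - y 0)^2 - a^2 * (∑ i, (x i - y i)^2)
      + (∑ i, (x i - y i) * (if i = (0 : Fin n) then b^2 * x 0 else a^2 * x i))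
    = a^2 * b^2 * (∑ i, cf a b i * y i * (x i - y i)) := by
  rw [sum_split (fun i => (x i - y i)^2),
      sum_split (fun i => (x i - y i) * (if i = (0:Fin n) then b^2 * x 0 else a^2 * x i)),
      sum_split (fun i => cf a b i * y i * (x i - y i))]
  rw [if_pos rfl]
  have hcf0 : cf a b (0 : Fin n) = (a^2)⁻¹ := if_pos rfl
  rw [hcf0]
  have e1 : ∑ i ∈ Finset.univ.erase (0:Fin n),
        (x i - y i) * (if i = (0:Fin n) then b^2 * x 0 else a^2 * x i)
      = ∑ i ∈ Finset.univ.erase (0:Fin n), (x i - y i) * (a^2 * x i) :=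
    Finset.sum_congr rfl fun i hi => by rw [if_neg (Finset.ne_of_mem_erase hi)]
  have e2 : ∑ i ∈ Finset.univ.erase (0:Fin n), cf a b i * y i * (x i - y i)
      = ∑ i ∈ Finset.univ.erase (0:Fin n), (b^2)⁻¹ * y i * (x i - y i) :=
    Finset.sum_congr rfl fun i hi => by rw [cf, if_neg (Finset.ne_of_mem_erase hi)]
  rw [e1, e2]
  have hsum : -(a^2) * (∑ i ∈ Finset.univ.erase (0:Fin n), (x i - y i)^2)
      + (∑ i ∈ Finset.univ.erase (0:Fin n), (x i - y i) * (a^2 * x i))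
      = a^2 * b^2 * (∑ i ∈ Finset.univ.erase (0:Fin n), (b^2)⁻¹ * y i * (x i - y i)) := by
    rw [Finset.mul_sum, Finset.mul_sum, ← Finset.sum_add_distrib]
    refine Finset.sum_congr rfl fun i hi => ?_
    field_simp
    ring
  have hhead : a^2 * b^2 * (a^2)⁻¹ = b^2 := by field_simp
  linear_combination hsum - (y 0 * (x 0 - y 0)) * hhead

end Stmt12

open Stmt12

/-- Outside the spheroid `Ω(a,b)` (`a ≠ b`), the anisotropic potential is
expressed through the Coulomb potential and its gradient:
`Ψ(x) = a²/(a²-b²) Φ₀(x) + 1/((n-2)(a²-b²)) ∇Φ₀(x)·(b²x₁, a²x')`. -/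
theorem statement12 (n : ℕ) [NeZero n] (hn : 3 ≤ n)
    (a b : ℝ) (ha : 0 < a) (hb : 0 < b) (hab : a ≠ b)
    (x : Euc n) (hx : x ∉ sphSet n a b) :
    anisPot n a b x
      = a ^ 2 / (a ^ 2 - b ^ 2) * coulPot n a b x
        + 1 / (((n : ℝ) - 2) * (a ^ 2 - b ^ 2)) *
          ⟪gradient (coulPot n a b) x,
            (EuclideanSpace.equiv (Fin n) ℝ).symm
              (fun i => if i = 0 then b ^ 2 * x 0 else a ^ 2 * x i)⟫ := by
  classical
  have hD : a ^ 2 - b ^ 2 ≠ 0 := by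
    intro h
    have h2 : (a - b) * (a + b) = 0 := by linear_combination h
    rcases mul_eq_zero.mp h2 with h3 | h3
    · exact hab (by linarith)
    · linarith
  have hnr : (3:ℝ) ≤ (n:ℝ) := by exact_mod_cast hn
  have hn2 : (n:ℝ) - 2 ≠ 0 := by linarith
  have hΩeq : sphSet n a b = {y : Euc n | Qf a b y ≤ 1} := sphSet_eq
  have hQx : 1 < Qf a b x := by
    rw [hΩeq] at hx
    exact not_le.mp fun hc => hx hc
  have hΩcomp : IsCompact (sphSet n a b) := hΩeq ▸ isCompact_sub ha hb 1
  have hΩmeas : MeasurableSet (sphSet n a b) := hΩcomp.isClosed.measurableSet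
  have hyne : ∀ y ∈ sphSet n a b, y ≠ x := by
    intro y hy he
    rw [hΩeq] at hy
    rw [he] at hy
    exact absurd hQx (not_lt.mpr hy)
  set c := (volume (sphSet n a b)).toReal⁻¹ with hc
  obtain ⟨hF'int, hFD⟩ := hasFDerivAt_coulPot hn ha hb hx
  set ve : Fin n → ℝ := fun i => if i = 0 then b ^ 2 * x 0 else a ^ 2 * x i with hve
  set v : Euc n := (EuclideanSpace.equiv (Fin n) ℝ).symm ve with hv
  have hvi : ∀ i, v i = ve i := fun i => rfl
  -- shorthand for the weight
  set P : Euc n → ℝ := fun y => (‖x - y‖ ^ 2 : ℝ) ^ (-(n:ℝ)/2) with hP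
  -- continuity of P on Ω
  have hPcont : ContinuousOn P (sphSet n a b) := by
    intro y hy
    have h0 : Pw x = P := by
      funext z
      rw [Pw_eq]
    rw [← h0]
    exact (continuousAt_Pw (hyne y hy)).continuousWithinAt
  -- integrability of the four integrands
  have hint : ∀ g : Euc n → ℝ, Continuous g →
      IntegrableOn (fun y => g y * P y) (sphSet n a b) volume := by
    intro g hg
    exact ContinuousOn.integrableOn_compact hΩcomp (hg.continuousOn.mul hPcont)
  have hg1c : Continuous (fun y : Euc n => (x 0 - y 0)^2) := by
    exact ((continuous_const.sub ((EuclideanSpace.proj (𝕜 := ℝ) (0:Fin n)).continuous)).pow 2)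
  have hg2c : Continuous (fun y : Euc n => ∑ i, (x i - y i)^2) :=
    continuous_finset_sum _ fun i _ =>
      ((continuous_const.sub ((EuclideanSpace.proj (𝕜 := ℝ) i).continuous)).pow 2)
  have hg3c : Continuous (fun y : Euc n => ∑ i, (x i - y i) * ve i) :=
    continuous_finset_sum _ fun i _ =>
      ((continuous_const.sub ((EuclideanSpace.proj (𝕜 := ℝ) i).continuous)).mul continuous_const)
  have hg4c : Continuous (fun y : Euc n => ∑ i, cf a b i * y i * (x i - y i)) :=
    continuous_finset_sum _ fun i _ =>
      ((continuous_const.mul ((EuclideanSpace.proj (𝕜 := ℝ) i).continuous)).mul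
        (continuous_const.sub ((EuclideanSpace.proj (𝕜 := ℝ) i).continuous)))
  -- the star identity transported to Ω
  have hstar : ∫ y in sphSet n a b, (∑ i, cf a b i * y i * (x i - y i)) * P y = 0 := by
    have h1 := star ha hb hn hQx
    have h2 : ∫ y in sphSet n a b, (∑ i, cf a b i * y i * (x i - y i)) * P y
        = ∫ y in {y : Euc n | Qf a b y < 1},
            (∑ i, cf a b i * y i * (x i - y i)) * P y := by
      rw [hΩeq]
      exact MeasureTheory.setIntegral_congr_set (omega_ae_eq_U ha hb)
    rw [h2]
    rw [show (fun y : Euc n => (∑ i, cf a b i * y i * (x i - y i)) * P y)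
        = fun y : Euc n => (∑ i, cf a b i * y i * (x i - y i)) * Pw x y from
      funext fun y => by rw [Pw_eq]]
    exact h1
  -- the integral identity E
  set I1 := ∫ y in sphSet n a b, (x 0 - y 0)^2 * P y with hI1def
  set I2 := ∫ y in sphSet n a b, (∑ i, (x i - y i)^2) * P y with hI2def
  set J := ∫ y in sphSet n a b, (∑ i, (x i - y i) * ve i) * P y with hJdef
  have hE : (a^2 - b^2) * I1 - a^2 * I2 + J = 0 := by
    have hsplit1 : (∫ y in sphSet n a b,
          ((a^2 - b^2) * ((x 0 - y 0)^2 * P y) - a^2 * ((∑ i, (x i - y i)^2) * P y)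
            + (∑ i, (x i - y i) * ve i) * P y))
        = (∫ y in sphSet n a b,
            ((a^2 - b^2) * ((x 0 - y 0)^2 * P y) - a^2 * ((∑ i, (x i - y i)^2) * P y)))
          + ∫ y in sphSet n a b, (∑ i, (x i - y i) * ve i) * P y :=
      integral_add ((((hint _ hg1c).const_mul _)).sub (((hint _ hg2c).const_mul _)))
        (hint _ hg3c)
    have hsplit2 : (∫ y in sphSet n a b,
          ((a^2 - b^2) * ((x 0 - y 0)^2 * P y) - a^2 * ((∑ i, (x i - y i)^2) * P y)))
        = (∫ y in sphSet n a b, (a^2 - b^2) * ((x 0 - y 0)^2 * P y))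
          - ∫ y in sphSet n a b, a^2 * ((∑ i, (x i - y i)^2) * P y) :=
      integral_sub (((hint _ hg1c).const_mul _)) (((hint _ hg2c).const_mul _))
    rw [hI1def, hI2def, hJdef, ← integral_const_mul (a^2 - b^2), ← integral_const_mul (a^2),
      ← hsplit2, ← hsplit1]
    have hpt : ∀ y ∈ sphSet n a b,
        ((a^2 - b^2) * ((x 0 - y 0)^2 * P y) - a^2 * ((∑ i, (x i - y i)^2) * P y)
          + (∑ i, (x i - y i) * ve i) * P y)
        = a^2 * b^2 * ((∑ i, cf a b i * y i * (x i - y i)) * P y) := by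
      intro y _
      have hbr := bracket (n := n) ha.ne' hb.ne' x y
      rw [hve]
      linear_combination (P y) * hbr
    calc ∫ y in sphSet n a b,
          ((a^2 - b^2) * ((x 0 - y 0)^2 * P y) - a^2 * ((∑ i, (x i - y i)^2) * P y)
            + (∑ i, (x i - y i) * ve i) * P y)
        = ∫ y in sphSet n a b,
            a^2 * b^2 * ((∑ i, cf a b i * y i * (x i - y i)) * P y) :=
          MeasureTheory.setIntegral_congr_fun hΩmeas hpt
      _ = a^2 * b^2 * ∫ y in sphSet n a b,
            (∑ i, cf a b i * y i * (x i - y i)) * P y := integral_const_mul _ _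
      _ = 0 := by rw [hstar, mul_zero]
  -- rewrite the three quantities in the goal
  have hanis : anisPot n a b x = c * I1 := by
    rw [anisPot, hI1def]
    congr 1
    refine integral_congr_ae (Filter.Eventually.of_forall fun y => ?_)
    simp only [hP]
    rw [rpow_half (x - y) n (NeZero.ne n), div_eq_mul_inv]
  have hcoul : coulPot n a b x = c * I2 := by
    rw [coulPot, hI2def]
    congr 1
    refine integral_congr_ae (Filter.Eventually.of_forall fun y => ?_)
    simp only [hP]
    rw [← smul_rpow_half hn (x - y)]
    congr 1
    rw [norm_sq_eq (x - y)]
    exact Finset.sum_congr rfl fun i _ => by rw [PiLp.sub_apply]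
  have hip : ⟪gradient (coulPot n a b) x, v⟫ = c * (((2:ℝ) - n) * J) := by
    have hG : HasGradientAt (coulPot n a b)
        ((InnerProductSpace.toDual ℝ (Euc n)).symm
          (c • ∫ y in sphSet n a b,
            ((((2:ℝ) - n)/2 * ((‖x - y‖ ^ 2 : ℝ) ^ (-(n:ℝ)/2)) * 2) • innerSL ℝ (x - y)))) x := by
      rw [hasGradientAt_iff_hasFDerivAt, LinearIsometryEquiv.apply_symm_apply]
      exact hFD
    rw [hG.gradient, InnerProductSpace.toDual_symm_apply]
    rw [ContinuousLinearMap.smul_apply, smul_eq_mul]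
    congr 1
    rw [ContinuousLinearMap.integral_apply hF'int v]
    rw [hJdef, ← integral_const_mul]
    refine integral_congr_ae (Filter.Eventually.of_forall fun y => ?_)
    show (((2 - (n:ℝ))/2 * ((‖x - y‖ ^ 2 : ℝ) ^ (-(n:ℝ)/2)) * 2) • innerSL ℝ (x - y)) v
        = (2 - (n:ℝ)) * ((∑ i, (x i - y i) * ve i) * P y)
    rw [ContinuousLinearMap.smul_apply, smul_eq_mul, innerSL_apply_apply]
    have hinner : ⟪x - y, v⟫ = ∑ i, (x i - y i) * ve i := by
      rw [PiLp.inner_apply]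
      refine Finset.sum_congr rfl fun i _ => ?_
      rw [hvi i, PiLp.sub_apply]
      simp [RCLike.inner_apply, starRingEnd_apply, mul_comm]
    rw [hinner]
    simp only [hP]
    ring
  -- final algebra
  rw [hanis, hcoul, hip]
  have hI1val : I1 = (a^2 * I2 - J) / (a^2 - b^2) := by
    rw [eq_div_iff hD]
    linarith
  rw [hI1val]
  field_simp
  ring
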